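/- Let Γ ≅ (ℤ/2ℤ) × (ℤ/2ℤ) with generators σ, τ, and let M = ℤ/8ℤ with σ acting by m ↦ −m and τ acting by m ↦ 3m. Then H¹(Γ, M) ≅ ℤ/2ℤ. -/

import Mathlib

/-!
A 1-cocycle `f` on `V₄ = ⟨σ, τ⟩` is determined by `a = f σ` and `b = f τ`. The relation `τ² = 1`
forces `4b = 0` and `στ = τσ` forces `2(a + b) = 0`, while the coboundaries are exactly the
cocycles with `a + b = 0` (the coboundary of `x` is `σ ↦ -2x, τ ↦ 2x`). Hence `f ↦ a + b`
identifies `H¹` with the subgroup `{0, 4}` of `ℤ/8`; the value `4` is attained by the cocycle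
`g ↦ 4·[g ∉ ⟨τ⟩]`.
-/

open CategoryTheory CategoryTheory.Limits groupCohomology

/-- A permutation `ℤΓ`-module: one isomorphic to `ℤ[X]` for some `Γ`-set `X`. -/
def IsPermutationModule {Γ : Type} [Group Γ] (F : Rep ℤ Γ) : Prop :=
  ∃ (X : Type) (_ : MulAction Γ X), Nonempty (F ≅ Rep.ofMulAction ℤ Γ X)

/-- A permutation projective module: a direct summand of a permutation module. -/
def IsPermutationProjective {Γ : Type} [Group Γ] (M : Rep ℤ Γ) : Prop :=
  ∃ F : Rep ℤ Γ, IsPermutationModule F ∧ ∃ (i : M ⟶ F) (r : F ⟶ M), i ≫ r = 𝟙 M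

/-- A coflasque module: `ℤ`-free with vanishing `H¹(Γ', M)` for all subgroups `Γ' ≤ Γ`. -/
def IsCoflasque {Γ : Type} [Group Γ] (M : Rep.{0} ℤ Γ) : Prop :=
  (@Module.Free ℤ M.V _ _ M.hV2) ∧
    ∀ Γ' : Subgroup Γ,
      Subsingleton (H1 (Rep.res Γ'.subtype M))

/-- A permutation presentation of `M`: an exact sequence `0 → F → F → M → 0`
with `F` a permutation module. -/
def HasPermutationPresentation {Γ : Type} [Group Γ] (M : Rep ℤ Γ) : Prop :=
  ∃ (F : Rep ℤ Γ) (_ : IsPermutationModule F) (f : F ⟶ F) (π : F ⟶ M),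
    Function.Injective f.hom ∧ Function.Surjective π.hom ∧ Function.Exact f.hom π.hom

/-- `π` is `H⁰`-surjective if it is surjective on `Γ'`-invariants for every subgroup `Γ'`. -/
def IsH0Surjective {Γ : Type} [Group Γ] {M N : Rep.{0} ℤ Γ} (π : M ⟶ N) : Prop :=
  ∀ Γ' : Subgroup Γ, ∀ n : N, (∀ γ : Γ', N.ρ ↑γ n = n) →
    ∃ m : M, (∀ γ : Γ', M.ρ ↑γ m = m) ∧ π.hom m = n

namespace groupCohomology

universe u

noncomputable def H1AddEquivRange {k G : Type u} [CommRing k] [Group G] {A : Rep k G}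
    {B : Type*} [AddGroup B] (φ : cocycles₁ A →+ B)
    (hφ : ∀ f : cocycles₁ A, ⇑f ∈ coboundaries₁ A ↔ φ f = 0) : H1 A ≃+ φ.range :=
  let π := (H1π A).hom.toAddMonoidHom
  have hπ : Function.Surjective π := (ModuleCat.epi_iff_surjective _).1 inferInstance
  have hker : π.ker = φ.ker := by
    ext f
    simp only [AddMonoidHom.mem_ker, ← hφ]
    exact H1π_eq_zero_iff f
  (QuotientAddGroup.quotientKerEquivOfSurjective π hπ).symm.trans
    ((QuotientAddGroup.quotientAddEquivOfEq hker).trans (QuotientAddGroup.quotientKerEquivRange φ))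

end groupCohomology

local notation "V₄" => Multiplicative (ZMod 2) × Multiplicative (ZMod 2)
local notation "σ" => ((Multiplicative.ofAdd 1, 1) : V₄)
local notation "τ" => ((1, Multiplicative.ofAdd 1) : V₄)

namespace KleinFourOnZMod8

lemma eq_one_or_σ_or_τ_or_σ_mul_τ (g : V₄) : g = 1 ∨ g = σ ∨ g = τ ∨ g = σ * τ := by
  revert g; decide

variable {ρ : Representation ℤ V₄ (ZMod 8)}

lemma cocycles₁_apply_mul (f : cocycles₁ (Rep.of ρ)) (g h : V₄) :
    f (g * h) = ρ g (f h) + f g :=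
  (mem_cocycles₁_iff (f : V₄ → ZMod 8)).1 f.2 g h

lemma four_mul_cocycles₁_apply_τ (hτ : ∀ m : ZMod 8, ρ τ m = 3 * m)
    (f : cocycles₁ (Rep.of ρ)) : 4 * f τ = 0 := by
  have h := cocycles₁_apply_mul f τ τ
  rw [show τ * τ = 1 by decide, cocycles₁_map_one, hτ] at h
  linear_combination -h

lemma cocycles₁_apply_σ_mul_τ (hσ : ∀ m : ZMod 8, ρ σ m = -m) (f : cocycles₁ (Rep.of ρ)) :
    f (σ * τ) = f σ - f τ := by
  rw [cocycles₁_apply_mul, hσ]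
  ring

lemma two_mul_cocycles₁_apply_σ_add_τ (hσ : ∀ m : ZMod 8, ρ σ m = -m)
    (hτ : ∀ m : ZMod 8, ρ τ m = 3 * m) (f : cocycles₁ (Rep.of ρ)) :
    2 * (f σ + f τ) = 0 := by
  have h := cocycles₁_apply_mul f τ σ
  rw [show τ * σ = σ * τ by decide, cocycles₁_apply_σ_mul_τ hσ, hτ] at h
  linear_combination -h

lemma mem_coboundaries₁_iff (hσ : ∀ m : ZMod 8, ρ σ m = -m)
    (hτ : ∀ m : ZMod 8, ρ τ m = 3 * m) (f : cocycles₁ (Rep.of ρ)) :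
    ⇑f ∈ coboundaries₁ (Rep.of ρ) ↔ f σ + f τ = 0 := by
  constructor
  · rintro ⟨x, hx⟩
    have hσx : ρ σ x - x = f σ := congrFun hx σ
    have hτx : ρ τ x - x = f τ := congrFun hx τ
    rw [hσ] at hσx
    rw [hτ] at hτx
    linear_combination -hσx - hτx
  · intro h0
    obtain ⟨x, hx⟩ : ∃ x : ZMod 8, 2 * x = f τ :=
      (by decide : ∀ t : ZMod 8, 4 * t = 0 → ∃ x : ZMod 8, 2 * x = t) _
        (four_mul_cocycles₁_apply_τ hτ f)
    refine ⟨x, funext fun g => ?_⟩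
    change ρ g x - x = f g
    rcases eq_one_or_σ_or_τ_or_σ_mul_τ g with rfl | rfl | rfl | rfl
    · simp
    · rw [hσ]
      linear_combination -hx - h0
    · rw [hτ]
      linear_combination hx
    · rw [map_mul, Module.End.mul_apply, hτ, hσ, cocycles₁_apply_σ_mul_τ hσ]
      linear_combination -2 * hx - h0

lemma apply_four (hσ : ∀ m : ZMod 8, ρ σ m = -m) (hτ : ∀ m : ZMod 8, ρ τ m = 3 * m)
    (g : V₄) : ρ g 4 = 4 := by
  rcases eq_one_or_σ_or_τ_or_σ_mul_τ g with rfl | rfl | rfl | rfl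
  · simp
  · rw [hσ]; decide
  · rw [hτ]; decide
  · rw [map_mul, Module.End.mul_apply, hτ, hσ]; decide

lemma exists_cocycles₁_apply_σ_add_τ_eq_four (hσ : ∀ m : ZMod 8, ρ σ m = -m)
    (hτ : ∀ m : ZMod 8, ρ τ m = 3 * m) : ∃ f : cocycles₁ (Rep.of ρ), f σ + f τ = 4 := by
  let χ : V₄ → ZMod 8 := fun g => if g.1 = 1 then 0 else 4
  have hχ_mul : ∀ g h : V₄, χ (g * h) = χ h + χ g := by decide
  -- `χ` takes values in `{0, 4}`, which `ρ` fixes, so the cocycle identity is additivity of `χ`.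
  have hχ : χ ∈ cocycles₁ (Rep.of ρ) := by
    rw [mem_cocycles₁_iff]
    intro g h
    have hfix : ρ g (χ h) = χ h := by
      by_cases h1 : h.1 = 1 <;> simp only [χ, h1, if_true, if_false, map_zero, apply_four hσ hτ]
    rw [Rep.of_ρ, hfix]
    exact hχ_mul g h
  exact ⟨⟨χ, hχ⟩, rfl⟩

def evalσAddEvalτ : cocycles₁ (Rep.of ρ) →+ ZMod 8 :=
  AddMonoidHom.mk' (fun f => f σ + f τ) fun f g => by
    change (f σ + g σ) + (f τ + g τ) = _
    ring

lemma coe_range_evalσAddEvalτ (hσ : ∀ m : ZMod 8, ρ σ m = -m)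
    (hτ : ∀ m : ZMod 8, ρ τ m = 3 * m) :
    ((evalσAddEvalτ (ρ := ρ)).range : Set (ZMod 8)) = {0, 4} := by
  ext x
  constructor
  · rintro ⟨f, rfl⟩
    exact (by decide : ∀ x : ZMod 8, 2 * x = 0 → x = 0 ∨ x = 4) _
      (two_mul_cocycles₁_apply_σ_add_τ hσ hτ f)
  · rintro (rfl | rfl)
    · exact zero_mem _
    · exact exists_cocycles₁_apply_σ_add_τ_eq_four hσ hτ

lemma card_range_evalσAddEvalτ (hσ : ∀ m : ZMod 8, ρ σ m = -m)
    (hτ : ∀ m : ZMod 8, ρ τ m = 3 * m) : Nat.card (evalσAddEvalτ (ρ := ρ)).range = 2 := by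
  rw [← SetLike.coe_sort_coe, Nat.card_coe_set_eq, coe_range_evalσAddEvalτ hσ hτ]
  exact Set.ncard_pair (by decide)

end KleinFourOnZMod8

theorem h1_klein_four_on_zmod8
    (ρ : Representation ℤ (Multiplicative (ZMod 2) × Multiplicative (ZMod 2)) (ZMod 8))
    (hσ : ∀ m : ZMod 8, ρ (Multiplicative.ofAdd 1, 1) m = -m)
    (hτ : ∀ m : ZMod 8, ρ (1, Multiplicative.ofAdd 1) m = 3 * m) :
    Nonempty (H1 (Rep.of ρ) ≃+ ZMod 2) :=
  ⟨(H1AddEquivRange _ (KleinFourOnZMod8.mem_coboundaries₁_iff hσ hτ)).trans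
    (addEquivOfPrimeCardEq (KleinFourOnZMod8.card_range_evalσAddEvalτ hσ hτ) (Nat.card_zmod 2))⟩
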